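/- Let L > 0, D > 0, k₀ ≥ 0, β > 0, U ≥ 0, b₂ > 0, b₁ ∈ ℝ, let p₀ be continuous on [0,L], and let w(t,x) be a smooth real-valued function on [0,∞) × [0,L] satisfying, for all t ≥ 0 and x ∈ [0,L], the nonlinear extensible beam equation w_tt + D w_xxxx + k₀ w_t + (b₁ − b₂‖w_x(t,·)‖²) w_xx = p₀(x) − β(w_t + U w_x), together with the hinged boundary conditions w(t,0) = w_xx(t,0) = w(t,L) = w_xx(t,L) = 0 for all t ≥ 0. Then the trajectory is bounded in the energy norm uniformly in time: there exists a constant C > 0 such that for all t ≥ 0, ‖w_xx(t,·)‖² + ‖w_t(t,·)‖² ≤ C. -/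

import Mathlib

open MeasureTheory intervalIntegral Function

/-- Partial derivative in time of `w(t,x)`. -/
noncomputable def pt (w : ℝ → ℝ → ℝ) : ℝ → ℝ → ℝ := fun t x => deriv (fun s => w s x) t

/-- Partial derivative in space of `w(t,x)`. -/
noncomputable def px (w : ℝ → ℝ → ℝ) : ℝ → ℝ → ℝ := fun t x => deriv (fun y => w t y) x



lemma hasDerivAt_slice_t {w : ℝ → ℝ → ℝ} (hw : ContDiff ℝ (⊤ : ℕ∞) (uncurry w)) (t x : ℝ) :
    HasDerivAt (fun s => w s x) (fderiv ℝ (uncurry w) (t, x) (1, 0)) t := by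
  have h1 : HasFDerivAt (uncurry w) (fderiv ℝ (uncurry w) (t, x)) (t, x) :=
    (hw.differentiable (by simp) (t, x)).hasFDerivAt
  have h2 : HasDerivAt (fun s : ℝ => ((s, x) : ℝ × ℝ)) ((1:ℝ), (0:ℝ)) t :=
    (hasDerivAt_id t).prodMk (hasDerivAt_const t x)
  exact h1.comp_hasDerivAt t h2

lemma hasDerivAt_slice_x {w : ℝ → ℝ → ℝ} (hw : ContDiff ℝ (⊤ : ℕ∞) (uncurry w)) (t x : ℝ) :
    HasDerivAt (fun y => w t y) (fderiv ℝ (uncurry w) (t, x) (0, 1)) x := by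
  have h1 : HasFDerivAt (uncurry w) (fderiv ℝ (uncurry w) (t, x)) (t, x) :=
    (hw.differentiable (by simp) (t, x)).hasFDerivAt
  have h2 : HasDerivAt (fun y : ℝ => ((t, y) : ℝ × ℝ)) ((0:ℝ), (1:ℝ)) x :=
    (hasDerivAt_const x t).prodMk (hasDerivAt_id x)
  exact h1.comp_hasDerivAt x h2

lemma pt_eq {w : ℝ → ℝ → ℝ} (hw : ContDiff ℝ (⊤ : ℕ∞) (uncurry w)) (t x : ℝ) :
    pt w t x = fderiv ℝ (uncurry w) (t, x) (1, 0) := (hasDerivAt_slice_t hw t x).deriv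

lemma px_eq {w : ℝ → ℝ → ℝ} (hw : ContDiff ℝ (⊤ : ℕ∞) (uncurry w)) (t x : ℝ) :
    px w t x = fderiv ℝ (uncurry w) (t, x) (0, 1) := (hasDerivAt_slice_x hw t x).deriv

lemma contDiff_pt {w : ℝ → ℝ → ℝ} (hw : ContDiff ℝ (⊤ : ℕ∞) (uncurry w)) :
    ContDiff ℝ (⊤ : ℕ∞) (uncurry (pt w)) := by
  have h : uncurry (pt w) = fun p : ℝ × ℝ => fderiv ℝ (uncurry w) p (1, 0) :=
    funext fun p => pt_eq hw p.1 p.2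
  rw [h]
  exact (hw.fderiv_right (by simp)).clm_apply contDiff_const

lemma contDiff_px {w : ℝ → ℝ → ℝ} (hw : ContDiff ℝ (⊤ : ℕ∞) (uncurry w)) :
    ContDiff ℝ (⊤ : ℕ∞) (uncurry (px w)) := by
  have h : uncurry (px w) = fun p : ℝ × ℝ => fderiv ℝ (uncurry w) p (0, 1) :=
    funext fun p => px_eq hw p.1 p.2
  rw [h]
  exact (hw.fderiv_right (by simp)).clm_apply contDiff_const

lemma hasDerivAt_pt {g : ℝ → ℝ → ℝ} (hg : ContDiff ℝ (⊤ : ℕ∞) (uncurry g)) (t x : ℝ) :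
    HasDerivAt (fun s => g s x) (pt g t x) t := by
  rw [pt_eq hg t x]; exact hasDerivAt_slice_t hg t x

lemma hasDerivAt_px {g : ℝ → ℝ → ℝ} (hg : ContDiff ℝ (⊤ : ℕ∞) (uncurry g)) (t x : ℝ) :
    HasDerivAt (fun y => g t y) (px g t x) x := by
  rw [px_eq hg t x]; exact hasDerivAt_slice_x hg t x

lemma fderiv_apply_dir {w : ℝ → ℝ → ℝ} (hw : ContDiff ℝ (⊤ : ℕ∞) (uncurry w)) (v u : ℝ × ℝ) (p : ℝ × ℝ) :
    fderiv ℝ (fun q : ℝ × ℝ => fderiv ℝ (uncurry w) q v) p u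
      = fderiv ℝ (fderiv ℝ (uncurry w)) p u v := by
  have hd : DifferentiableAt ℝ (fderiv ℝ (uncurry w)) p :=
    ((hw.fderiv_right (m := (⊤ : ℕ∞)) (by simp)).differentiable (by simp)) p
  have h : HasFDerivAt (fun q : ℝ × ℝ => fderiv ℝ (uncurry w) q v)
      ((ContinuousLinearMap.apply ℝ ℝ v).comp (fderiv ℝ (fderiv ℝ (uncurry w)) p)) p :=
    (ContinuousLinearMap.apply ℝ ℝ v).hasFDerivAt.comp p hd.hasFDerivAt
  simp [h.fderiv]

lemma pt_px_comm {w : ℝ → ℝ → ℝ} (hw : ContDiff ℝ (⊤ : ℕ∞) (uncurry w)) (t x : ℝ) :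
    pt (px w) t x = px (pt w) t x := by
  have hsymm : ∀ v u : ℝ × ℝ,
      fderiv ℝ (fderiv ℝ (uncurry w)) (t, x) v u
        = fderiv ℝ (fderiv ℝ (uncurry w)) (t, x) u v := by
    intro v u
    exact second_derivative_symmetric
      (fun y => ((hw.differentiable (by simp)) y).hasFDerivAt)
      (((hw.fderiv_right (m := (⊤ : ℕ∞)) (by simp)).differentiable (by simp) (t, x)).hasFDerivAt) v u
  have hup : uncurry (px w) = fun q : ℝ × ℝ => fderiv ℝ (uncurry w) q (0, 1) :=
    funext fun q => px_eq hw q.1 q.2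
  have hut : uncurry (pt w) = fun q : ℝ × ℝ => fderiv ℝ (uncurry w) q (1, 0) :=
    funext fun q => pt_eq hw q.1 q.2
  have h1 : pt (px w) t x
      = fderiv ℝ (fun q : ℝ × ℝ => fderiv ℝ (uncurry w) q (0, 1)) (t, x) (1, 0) := by
    rw [pt_eq (contDiff_px hw) t x, hup]
  have h2 : px (pt w) t x
      = fderiv ℝ (fun q : ℝ × ℝ => fderiv ℝ (uncurry w) q (1, 0)) (t, x) (0, 1) := by
    rw [px_eq (contDiff_pt hw) t x, hut]
  rw [h1, h2, fderiv_apply_dir hw _ _, fderiv_apply_dir hw _ _, hsymm]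

lemma cont_slice {F : ℝ → ℝ → ℝ} (hF : Continuous (uncurry F)) (t : ℝ) :
    Continuous (F t) := hF.comp (continuous_const.prodMk continuous_id)

lemma hasDerivAt_intInt {F F' : ℝ → ℝ → ℝ} {L : ℝ}
    (hF : Continuous (uncurry F)) (hF' : Continuous (uncurry F'))
    (hder : ∀ t x, HasDerivAt (fun s => F s x) (F' t x) t) (t₀ : ℝ) :
    HasDerivAt (fun t => ∫ x in (0:ℝ)..L, F t x) (∫ x in (0:ℝ)..L, F' t₀ x) t₀ := by
  obtain ⟨K, hK⟩ : ∃ K, ∀ p ∈ (Set.Icc (t₀-1) (t₀+1)) ×ˢ (Set.uIcc (0:ℝ) L),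
      ‖uncurry F' p‖ ≤ K := by
    refine ((isCompact_Icc.prod isCompact_uIcc).exists_bound_of_continuousOn
      hF'.continuousOn)
  refine (intervalIntegral.hasDerivAt_integral_of_dominated_loc_of_deriv_le
    (F := F) (F' := F') (bound := fun _ => K) (Metric.ball_mem_nhds t₀ one_pos)
    (Filter.Eventually.of_forall fun t => (cont_slice hF t).aestronglyMeasurable)
    ((cont_slice hF t₀).intervalIntegrable _ _)
    ((cont_slice hF' t₀).aestronglyMeasurable)
    (MeasureTheory.ae_of_all _ fun x hx t ht => ?_)
    (intervalIntegrable_const)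
    (MeasureTheory.ae_of_all _ fun x _ t _ => hder t x)).2
  have ht' := abs_lt.mp (by simpa [Real.dist_eq] using Metric.mem_ball.mp ht)
  exact hK (t, x) ⟨⟨by linarith [ht'.1], by linarith [ht'.2]⟩, Set.uIoc_subset_uIcc hx⟩

lemma ibp {u v u' v' : ℝ → ℝ} {L : ℝ}
    (hu : ∀ x, HasDerivAt u (u' x) x) (hv : ∀ x, HasDerivAt v (v' x) x)
    (hu' : Continuous u') (hv' : Continuous v') :
    ∫ x in (0:ℝ)..L, u x * v' x
      = u L * v L - u 0 * v 0 - ∫ x in (0:ℝ)..L, u' x * v x :=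
  integral_mul_deriv_eq_deriv_mul (fun x _ => hu x) (fun x _ => hv x)
    (hu'.intervalIntegrable _ _) (hv'.intervalIntegrable _ _)

lemma int5 {g1 g2 g3 g4 g5 : ℝ → ℝ} (c1 c2 c3 c4 c5 : ℝ) {L : ℝ}
    (h1 : Continuous g1) (h2 : Continuous g2) (h3 : Continuous g3)
    (h4 : Continuous g4) (h5 : Continuous g5) :
    ∫ x in (0:ℝ)..L, (c1 * g1 x + c2 * g2 x + c3 * g3 x + c4 * g4 x + c5 * g5 x)
      = c1 * (∫ x in (0:ℝ)..L, g1 x) + c2 * (∫ x in (0:ℝ)..L, g2 x)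
        + c3 * (∫ x in (0:ℝ)..L, g3 x) + c4 * (∫ x in (0:ℝ)..L, g4 x)
        + c5 * (∫ x in (0:ℝ)..L, g5 x) := by
  have i1 : IntervalIntegrable (fun x => c1 * g1 x) volume 0 L :=
    (continuous_const.mul h1).intervalIntegrable _ _
  have i2 : IntervalIntegrable (fun x => c2 * g2 x) volume 0 L :=
    (continuous_const.mul h2).intervalIntegrable _ _
  have i3 : IntervalIntegrable (fun x => c3 * g3 x) volume 0 L :=
    (continuous_const.mul h3).intervalIntegrable _ _
  have i4 : IntervalIntegrable (fun x => c4 * g4 x) volume 0 L :=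
    (continuous_const.mul h4).intervalIntegrable _ _
  have i5 : IntervalIntegrable (fun x => c5 * g5 x) volume 0 L :=
    (continuous_const.mul h5).intervalIntegrable _ _
  rw [integral_add (((i1.add i2).add i3).add i4) i5,
      integral_add ((i1.add i2).add i3) i4, integral_add (i1.add i2) i3,
      integral_add i1 i2, intervalIntegral.integral_const_mul, intervalIntegral.integral_const_mul,
      intervalIntegral.integral_const_mul, intervalIntegral.integral_const_mul, intervalIntegral.integral_const_mul]

lemma int2 {g1 g2 : ℝ → ℝ} (c1 c2 : ℝ) {L : ℝ}
    (h1 : Continuous g1) (h2 : Continuous g2) :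
    ∫ x in (0:ℝ)..L, (c1 * g1 x + c2 * g2 x)
      = c1 * (∫ x in (0:ℝ)..L, g1 x) + c2 * (∫ x in (0:ℝ)..L, g2 x) := by
  rw [integral_add ((show Continuous fun x => c1 * g1 x from continuous_const.mul h1).intervalIntegrable _ _)
      ((show Continuous fun x => c2 * g2 x from continuous_const.mul h2).intervalIntegrable _ _), intervalIntegral.integral_const_mul, intervalIntegral.integral_const_mul]

lemma young_sq {h A c : ℝ} (hh : 0 < h) : A * c ≤ h * c ^ 2 + A ^ 2 / (4 * h) := by
  set d := A ^ 2 / (4 * h) with hddef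
  have hd : d * (4 * h) = A ^ 2 := by rw [hddef, div_mul_cancel₀]; positivity
  nlinarith [sq_nonneg (2 * h * c - A), hd, hh, mul_pos hh hh]

/-- mini Cauchy–Schwarz : `(∫ |f|)² ≤ L ∫ f²`. -/
lemma sq_int_abs_le {f : ℝ → ℝ} {L : ℝ} (hL : 0 < L) (hf : Continuous f) :
    (∫ x in (0:ℝ)..L, |f x|) ^ 2 ≤ L * ∫ x in (0:ℝ)..L, (f x) ^ 2 := by
  set A := ∫ x in (0:ℝ)..L, |f x| with hA
  set I := ∫ x in (0:ℝ)..L, (f x) ^ 2 with hI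
  have hA0 : 0 ≤ A := intervalIntegral.integral_nonneg hL.le fun x _ => abs_nonneg _
  have hI0 : 0 ≤ I := intervalIntegral.integral_nonneg hL.le fun x _ => sq_nonneg _
  have key : ∀ l : ℝ, 0 < l → A ≤ l * L / 2 + I / (2 * l) := by
    intro l hl
    have hpw : ∀ x ∈ Set.Icc (0:ℝ) L, |f x| ≤ l / 2 + 1 / (2 * l) * (f x) ^ 2 := by
      intro x _
      have hd : 1 / (2 * l) * (f x) ^ 2 * (2 * l) = (f x) ^ 2 := by field_simp
      nlinarith [sq_nonneg (|f x| - l), sq_abs (f x), hd, hl]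
    calc A ≤ ∫ x in (0:ℝ)..L, (l / 2 + 1 / (2 * l) * (f x) ^ 2) := by
            refine integral_mono_on hL.le (hf.abs.intervalIntegrable _ _) ?_ hpw
            exact (continuous_const.add (continuous_const.mul (hf.pow 2))).intervalIntegrable _ _
      _ = l * L / 2 + I / (2 * l) := by
            rw [integral_add intervalIntegrable_const
                ((show Continuous fun x => 1 / (2 * l) * f x ^ 2 from continuous_const.mul (hf.pow 2)).intervalIntegrable _ _),
              intervalIntegral.integral_const_mul, intervalIntegral.integral_const, smul_eq_mul, ← hI]
            ring
  rcases eq_or_lt_of_le hA0 with h0 | hA0'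
  · nlinarith
  · have hkey := key (A / L) (by positivity)
    have e1 : A / L * L = A := div_mul_cancel₀ _ hL.ne'
    have e2 : I / (2 * (A / L)) = I * L / (2 * A) := by
      rw [div_eq_div_iff (by positivity) (by positivity)]; field_simp
    rw [e2] at hkey
    have h2 : A / 2 ≤ I * L / (2 * A) := by nlinarith
    rw [div_le_div_iff₀ (by norm_num) (by positivity)] at h2
    nlinarith

/-- Poincaré-type bound: if `u` vanishes somewhere in `[0,L]`,
then `u x ^ 2 ≤ L ∫ u'^2` on `[0,L]`. -/
lemma poincare {u u' : ℝ → ℝ} {L : ℝ} (hL : 0 < L)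
    (hder : ∀ x, HasDerivAt u (u' x) x) (hu' : Continuous u')
    (hmid : ∃ ξ ∈ Set.Icc (0:ℝ) L, u ξ = 0) {x : ℝ} (hx : x ∈ Set.Icc (0:ℝ) L) :
    (u x) ^ 2 ≤ L * ∫ y in (0:ℝ)..L, (u' y) ^ 2 := by
  obtain ⟨ξ, hξ, hξ0⟩ := hmid
  have hftc : ∫ y in ξ..x, u' y = u x - u ξ :=
    integral_eq_sub_of_hasDerivAt (fun y _ => hder y) (hu'.intervalIntegrable _ _)
  have habs : |u x| ≤ ∫ y in (0:ℝ)..L, |u' y| := by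
    have h1 : |u x| = |∫ y in ξ..x, u' y| := by rw [hftc, hξ0, sub_zero]
    rw [h1]
    rcases le_total ξ x with h | h
    · calc |∫ y in ξ..x, u' y| ≤ ∫ y in ξ..x, |u' y| := abs_integral_le_integral_abs h
        _ ≤ ∫ y in (0:ℝ)..L, |u' y| :=
          integral_mono_interval hξ.1 h hx.2 (ae_of_all _ fun y => abs_nonneg _)
            (hu'.abs.intervalIntegrable _ _)
    · rw [integral_symm]
      calc |-∫ y in x..ξ, u' y| = |∫ y in x..ξ, u' y| := abs_neg _
        _ ≤ ∫ y in x..ξ, |u' y| := abs_integral_le_integral_abs h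
        _ ≤ ∫ y in (0:ℝ)..L, |u' y| :=
          integral_mono_interval hx.1 h hξ.2 (ae_of_all _ fun y => abs_nonneg _)
            (hu'.abs.intervalIntegrable _ _)
  calc (u x) ^ 2 = |u x| ^ 2 := (sq_abs _).symm
    _ ≤ (∫ y in (0:ℝ)..L, |u' y|) ^ 2 := by
        have h0 : (0:ℝ) ≤ ∫ y in (0:ℝ)..L, |u' y| :=
          intervalIntegral.integral_nonneg hL.le fun y _ => abs_nonneg _
        exact pow_le_pow_left₀ (abs_nonneg _) habs 2
    _ ≤ L * ∫ y in (0:ℝ)..L, (u' y) ^ 2 := sq_int_abs_le hL hu'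

lemma young2 {β c u v : ℝ} (hβ : 0 < β) :
    -(c * (u * v)) ≤ β / 4 * v ^ 2 + c ^ 2 / β * u ^ 2 := by
  have h := young_sq (h := β / 4) (A := -(c * u)) (c := v) (by linarith)
  have e : (-(c * u)) ^ 2 / (4 * (β / 4)) = c ^ 2 / β * u ^ 2 := by
    rw [div_eq_iff (by linarith : (4:ℝ) * (β/4) ≠ 0)]
    field_simp
  calc -(c * (u * v)) = -(c * u) * v := by ring
    _ ≤ β / 4 * v ^ 2 + (-(c * u)) ^ 2 / (4 * (β / 4)) := h
    _ = β / 4 * v ^ 2 + c ^ 2 / β * u ^ 2 := by rw [e]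

lemma young_int {u v : ℝ → ℝ} {L c β : ℝ} (hL : 0 < L) (hβ : 0 < β)
    (hu : Continuous u) (hv : Continuous v) :
    -(c * ∫ x in (0:ℝ)..L, u x * v x)
      ≤ β / 4 * (∫ x in (0:ℝ)..L, (v x) ^ 2) + c ^ 2 / β * (∫ x in (0:ℝ)..L, (u x) ^ 2) := by
  have h1 : -(c * ∫ x in (0:ℝ)..L, u x * v x)
      = ∫ x in (0:ℝ)..L, -(c * (u x * v x)) := by
    rw [← intervalIntegral.integral_const_mul, ← intervalIntegral.integral_neg]
  rw [h1]
  calc ∫ x in (0:ℝ)..L, -(c * (u x * v x))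
      ≤ ∫ x in (0:ℝ)..L, (β / 4 * (v x) ^ 2 + c ^ 2 / β * (u x) ^ 2) := by
        refine integral_mono_on hL.le ?_ ?_ (fun x _ => young2 hβ)
        · exact ((continuous_const.mul (hu.mul hv)).neg).intervalIntegrable _ _
        · exact ((continuous_const.mul (hv.pow 2)).add
            (continuous_const.mul (hu.pow 2))).intervalIntegrable _ _
    _ = β / 4 * (∫ x in (0:ℝ)..L, (v x) ^ 2) + c ^ 2 / β * (∫ x in (0:ℝ)..L, (u x) ^ 2) :=
        int2 _ _ (hv.pow 2) (hu.pow 2)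

lemma abs_int_young {p u : ℝ → ℝ} {L h : ℝ} (hL : 0 < L) (hh : 0 < h)
    (hp : Continuous p) (hu : Continuous u) :
    |∫ x in (0:ℝ)..L, p x * u x|
      ≤ h * (∫ x in (0:ℝ)..L, (u x) ^ 2) + 1 / (4 * h) * (∫ x in (0:ℝ)..L, (p x) ^ 2) := by
  calc |∫ x in (0:ℝ)..L, p x * u x| ≤ ∫ x in (0:ℝ)..L, |p x * u x| :=
        abs_integral_le_integral_abs hL.le
    _ ≤ ∫ x in (0:ℝ)..L, (h * (u x) ^ 2 + 1 / (4 * h) * (p x) ^ 2) := by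
        refine integral_mono_on hL.le ((hp.mul hu).abs.intervalIntegrable _ _)
          (((continuous_const.mul (hu.pow 2)).add
            (continuous_const.mul (hp.pow 2))).intervalIntegrable _ _) (fun x _ => ?_)
        have h2 := young_sq (h := h) (A := |p x|) (c := |u x|) hh
        have e1 : |p x * u x| = |p x| * |u x| := abs_mul _ _
        have e2 : |u x| ^ 2 = (u x) ^ 2 := sq_abs _
        have e3 : |p x| ^ 2 / (4 * h) = 1 / (4 * h) * (p x) ^ 2 := by
          rw [sq_abs]; ring
        rw [e1]
        calc |p x| * |u x| ≤ h * |u x| ^ 2 + |p x| ^ 2 / (4 * h) := h2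
          _ = h * (u x) ^ 2 + 1 / (4 * h) * (p x) ^ 2 := by rw [e2, e3]
    _ = h * (∫ x in (0:ℝ)..L, (u x) ^ 2) + 1 / (4 * h) * (∫ x in (0:ℝ)..L, (p x) ^ 2) :=
        int2 _ _ (hu.pow 2) (hp.pow 2)



lemma int6 {g1 g2 g3 g4 g5 g6 : ℝ → ℝ} (c1 c2 c3 c4 c5 c6 : ℝ) {L : ℝ}
    (h1 : Continuous g1) (h2 : Continuous g2) (h3 : Continuous g3)
    (h4 : Continuous g4) (h5 : Continuous g5) (h6 : Continuous g6) :
    ∫ x in (0:ℝ)..L, (c1 * g1 x + c2 * g2 x + c3 * g3 x + c4 * g4 x + c5 * g5 x + c6 * g6 x)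
      = c1 * (∫ x in (0:ℝ)..L, g1 x) + c2 * (∫ x in (0:ℝ)..L, g2 x)
        + c3 * (∫ x in (0:ℝ)..L, g3 x) + c4 * (∫ x in (0:ℝ)..L, g4 x)
        + c5 * (∫ x in (0:ℝ)..L, g5 x) + c6 * (∫ x in (0:ℝ)..L, g6 x) := by
  have i5 : ∫ x in (0:ℝ)..L, (c1 * g1 x + c2 * g2 x + c3 * g3 x + c4 * g4 x + c5 * g5 x)
      = c1 * (∫ x in (0:ℝ)..L, g1 x) + c2 * (∫ x in (0:ℝ)..L, g2 x)
        + c3 * (∫ x in (0:ℝ)..L, g3 x) + c4 * (∫ x in (0:ℝ)..L, g4 x)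
        + c5 * (∫ x in (0:ℝ)..L, g5 x) := int5 c1 c2 c3 c4 c5 h1 h2 h3 h4 h5
  have hsum : IntervalIntegrable (fun x => c1 * g1 x + c2 * g2 x + c3 * g3 x + c4 * g4 x + c5 * g5 x) volume 0 L :=
    ((((((continuous_const.mul h1).add (continuous_const.mul h2)).add
      (continuous_const.mul h3)).add (continuous_const.mul h4)).add
      (continuous_const.mul h5))).intervalIntegrable _ _
  rw [integral_add hsum ((show Continuous fun x => c6 * g6 x from continuous_const.mul h6).intervalIntegrable _ _), i5,
    intervalIntegral.integral_const_mul]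

set_option maxHeartbeats 2000000 in
/-- Global-in-time energy bound for the nonlinear extensible hinged–hinged
piston-theoretic beam. -/
theorem hinged_global_bound (L D k₀ β U b₂ b₁ : ℝ) (hL : 0 < L) (hD : 0 < D)
    (hk₀ : 0 ≤ k₀) (hβ : 0 < β) (hU : 0 ≤ U) (hb₂ : 0 < b₂)
    (p₀ : ℝ → ℝ) (hp₀ : ContinuousOn p₀ (Set.Icc 0 L))
    (w : ℝ → ℝ → ℝ) (hw : ContDiff ℝ (⊤ : ℕ∞) (Function.uncurry w))
    (heq : ∀ t ≥ (0:ℝ), ∀ x ∈ Set.Icc (0:ℝ) L,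
      pt (pt w) t x + D * px (px (px (px w))) t x + k₀ * pt w t x
          + (b₁ - b₂ * ∫ y in (0:ℝ)..L, (px w t y) ^ 2) * px (px w) t x
        = p₀ x - β * (pt w t x + U * px w t x))
    (hbc : ∀ t ≥ (0:ℝ), w t 0 = 0 ∧ px (px w) t 0 = 0 ∧ w t L = 0 ∧ px (px w) t L = 0) :
    ∃ C : ℝ, 0 < C ∧ ∀ t ≥ (0:ℝ),
      (∫ x in (0:ℝ)..L, (px (px w) t x) ^ 2)
        + (∫ x in (0:ℝ)..L, (pt w t x) ^ 2) ≤ C :=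
  by
  classical
  -- continuous extension of p₀ to all of ℝ
  have hmap : ∀ x : ℝ, max 0 (min x L) ∈ Set.Icc (0:ℝ) L := fun x =>
    ⟨le_max_left _ _, max_le hL.le (min_le_right _ _)⟩
  set pp : ℝ → ℝ := fun x => p₀ (max 0 (min x L)) with hppdef
  have hppc : Continuous pp :=
    hp₀.comp_continuous (continuous_const.max (continuous_id.min continuous_const)) hmap
  have hppeq : ∀ x ∈ Set.Icc (0:ℝ) L, pp x = p₀ x := by
    intro x hx
    simp only [hppdef]
    rw [min_eq_left hx.2, max_eq_right hx.1]
  -- smoothness of all partial derivatives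
  have hwt := contDiff_pt hw
  have hwx := contDiff_px hw
  have hwxx := contDiff_px hwx
  have hwxxx := contDiff_px hwxx
  have hwxxxx := contDiff_px hwxxx
  have hwtt := contDiff_pt hwt
  have hwtx := contDiff_px hwt
  have hwxt := contDiff_pt hwx
  have hwtxx := contDiff_px hwtx
  have hwxxt := contDiff_pt hwxx
  -- commutation of mixed partials
  have hcomm : pt (px w) = px (pt w) := funext fun t => funext fun x => pt_px_comm hw t x
  have hcomm2 : ∀ t x, pt (px (px w)) t x = px (px (pt w)) t x := by
    intro t x
    rw [pt_px_comm hwx t x, hcomm]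
  -- energy components
  set A : ℝ → ℝ := fun t => ∫ x in (0:ℝ)..L, (px (px w) t x) ^ 2 with hAdef
  set B : ℝ → ℝ := fun t => ∫ x in (0:ℝ)..L, (pt w t x) ^ 2 with hBdef
  set Cc : ℝ → ℝ := fun t => ∫ x in (0:ℝ)..L, (px w t x) ^ 2 with hCdef
  set Wf : ℝ → ℝ := fun t => ∫ x in (0:ℝ)..L, (w t x) ^ 2 with hWdef
  set Qf : ℝ → ℝ := fun t => ∫ x in (0:ℝ)..L, pp x * w t x with hQdef
  set Mf : ℝ → ℝ := fun t => ∫ x in (0:ℝ)..L, w t x * pt w t x with hMdef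
  set Rf : ℝ → ℝ := fun t => ∫ x in (0:ℝ)..L, px w t x * pt w t x with hRdef
  -- derivative formulas for the energy components
  have hAd : ∀ t, HasDerivAt A
      (∫ x in (0:ℝ)..L, 2 * px (px w) t x * pt (px (px w)) t x) t := by
    intro t
    refine hasDerivAt_intInt (F := fun t x => (px (px w) t x) ^ 2)
      (F' := fun t x => 2 * px (px w) t x * pt (px (px w)) t x)
      (hwxx.continuous.fun_pow 2)
      ((continuous_const.fun_mul hwxx.continuous).fun_mul hwxxt.continuous)
      (fun t x => by simpa using (hasDerivAt_pt hwxx t x).fun_pow 2) t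
  have hBd : ∀ t, HasDerivAt B
      (∫ x in (0:ℝ)..L, 2 * pt w t x * pt (pt w) t x) t := by
    intro t
    refine hasDerivAt_intInt (F := fun t x => (pt w t x) ^ 2)
      (F' := fun t x => 2 * pt w t x * pt (pt w) t x)
      (hwt.continuous.fun_pow 2)
      ((continuous_const.fun_mul hwt.continuous).fun_mul hwtt.continuous)
      (fun t x => by simpa using (hasDerivAt_pt hwt t x).fun_pow 2) t
  have hCd : ∀ t, HasDerivAt Cc
      (∫ x in (0:ℝ)..L, 2 * px w t x * pt (px w) t x) t := by
    intro t
    refine hasDerivAt_intInt (F := fun t x => (px w t x) ^ 2)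
      (F' := fun t x => 2 * px w t x * pt (px w) t x)
      (hwx.continuous.fun_pow 2)
      ((continuous_const.fun_mul hwx.continuous).fun_mul hwxt.continuous)
      (fun t x => by simpa using (hasDerivAt_pt hwx t x).fun_pow 2) t
  have hQd : ∀ t, HasDerivAt Qf (∫ x in (0:ℝ)..L, pp x * pt w t x) t := by
    intro t
    refine hasDerivAt_intInt (F := fun t x => pp x * w t x)
      (F' := fun t x => pp x * pt w t x)
      ((hppc.comp continuous_snd).mul hw.continuous)
      ((hppc.comp continuous_snd).mul hwt.continuous)
      (fun t x => (hasDerivAt_pt hw t x).const_mul (pp x)) t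
  have hMd : ∀ t, HasDerivAt Mf
      (∫ x in (0:ℝ)..L, (pt w t x * pt w t x + w t x * pt (pt w) t x)) t := by
    intro t
    refine hasDerivAt_intInt (F := fun t x => w t x * pt w t x)
      (F' := fun t x => pt w t x * pt w t x + w t x * pt (pt w) t x)
      (hw.continuous.mul hwt.continuous)
      ((hwt.continuous.mul hwt.continuous).add (hw.continuous.mul hwtt.continuous))
      (fun t x => (hasDerivAt_pt hw t x).mul (hasDerivAt_pt hwt t x)) t
    -- continuity of slices
  have csl : ∀ (g : ℝ → ℝ → ℝ), Continuous (uncurry g) → ∀ t, Continuous (g t) :=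
    fun g hg t => cont_slice hg t
  -- nonnegativity
  have hA0 : ∀ t, 0 ≤ A t := fun t =>
    intervalIntegral.integral_nonneg hL.le fun x _ => sq_nonneg _
  have hB0 : ∀ t, 0 ≤ B t := fun t =>
    intervalIntegral.integral_nonneg hL.le fun x _ => sq_nonneg _
  have hC0 : ∀ t, 0 ≤ Cc t := fun t =>
    intervalIntegral.integral_nonneg hL.le fun x _ => sq_nonneg _
  have hW0 : ∀ t, 0 ≤ Wf t := fun t =>
    intervalIntegral.integral_nonneg hL.le fun x _ => sq_nonneg _
  set P : ℝ := ∫ x in (0:ℝ)..L, (pp x) ^ 2 with hPdef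
  have hP0 : 0 ≤ P := intervalIntegral.integral_nonneg hL.le fun x _ => sq_nonneg _
  -- Poincaré inequalities (for t ≥ 0, using the boundary conditions)
  have hWC : ∀ t ≥ (0:ℝ), Wf t ≤ L ^ 2 * Cc t := by
    intro t ht
    have hpw : ∀ x ∈ Set.Icc (0:ℝ) L, (w t x) ^ 2 ≤ L * Cc t := by
      intro x hx
      exact poincare hL (fun y => hasDerivAt_px hw t y) (csl (px w) hwx.continuous t)
        ⟨0, Set.left_mem_Icc.mpr hL.le, (hbc t ht).1⟩ hx
    calc Wf t ≤ ∫ x in (0:ℝ)..L, L * Cc t := by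
          refine integral_mono_on hL.le ?_ intervalIntegrable_const hpw
          exact ((csl w hw.continuous t).pow 2).intervalIntegrable _ _
      _ = L ^ 2 * Cc t := by
          rw [intervalIntegral.integral_const, smul_eq_mul]; ring
  have hCA : ∀ t ≥ (0:ℝ), Cc t ≤ L ^ 2 * A t := by
    intro t ht
    obtain ⟨hb1, hb2, hb3, hb4⟩ := hbc t ht
    obtain ⟨ξ, hξ, hξ'⟩ := exists_hasDerivAt_eq_slope (fun y => w t y) (fun y => px w t y)
      hL ((csl w hw.continuous t).continuousOn) (fun y _ => hasDerivAt_px hw t y)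
    have hξ0 : px w t ξ = 0 := by rw [hξ']; rw [hb1, hb3]; simp
    have hpw : ∀ x ∈ Set.Icc (0:ℝ) L, (px w t x) ^ 2 ≤ L * A t := by
      intro x hx
      exact poincare hL (fun y => hasDerivAt_px hwx t y) (csl (px (px w)) hwxx.continuous t)
        ⟨ξ, Set.mem_Icc_of_Ioo hξ, hξ0⟩ hx
    calc Cc t ≤ ∫ x in (0:ℝ)..L, L * A t := by
          refine integral_mono_on hL.le ?_ intervalIntegrable_const hpw
          exact ((csl (px w) hwx.continuous t).pow 2).intervalIntegrable _ _
      _ = L ^ 2 * A t := by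
          rw [intervalIntegral.integral_const, smul_eq_mul]; ring
  have hWA : ∀ t ≥ (0:ℝ), Wf t ≤ L ^ 4 * A t := by
    intro t ht
    have h1 := hWC t ht
    have h2 := hCA t ht
    nlinarith [sq_nonneg L, sq_nonneg (L^2)]
  -- choice of the small parameter ε
  have hkβ : (0:ℝ) < k₀ + β := by linarith
  have hX : (0:ℝ) < (k₀ + β) ^ 2 * L ^ 4 := by positivity
  have hL4 : (0:ℝ) < L ^ 4 := by positivity
  obtain ⟨ε, hε0, hε1, hε2, hε3, hε4⟩ :
      ∃ ε : ℝ, 0 < ε ∧ ε ≤ β / 4 ∧ ε ≤ 1 / 4 ∧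
        ε * (4 * ((k₀ + β) ^ 2 * L ^ 4)) ≤ β * D ∧ ε * (4 * L ^ 4) ≤ D := by
    refine ⟨min (min (β / 4) (1 / 4))
      (min (β * D / (4 * ((k₀ + β) ^ 2 * L ^ 4))) (D / (4 * L ^ 4))), ?_, ?_, ?_, ?_, ?_⟩
    · refine lt_min (lt_min (by linarith) (by norm_num)) (lt_min ?_ ?_) <;> positivity
    · exact (min_le_left _ _).trans (min_le_left _ _)
    · exact (min_le_left _ _).trans (min_le_right _ _)
    · have h : min (min (β / 4) (1 / 4))
            (min (β * D / (4 * ((k₀ + β) ^ 2 * L ^ 4))) (D / (4 * L ^ 4)))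
            ≤ β * D / (4 * ((k₀ + β) ^ 2 * L ^ 4)) :=
        le_trans (min_le_right _ _) (min_le_left _ _)
      calc min (min (β / 4) (1 / 4))
            (min (β * D / (4 * ((k₀ + β) ^ 2 * L ^ 4))) (D / (4 * L ^ 4)))
            * (4 * ((k₀ + β) ^ 2 * L ^ 4))
          ≤ β * D / (4 * ((k₀ + β) ^ 2 * L ^ 4)) * (4 * ((k₀ + β) ^ 2 * L ^ 4)) := by
            apply mul_le_mul_of_nonneg_right h (by positivity)
        _ = β * D := by field_simp
    · have h : min (min (β / 4) (1 / 4))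
            (min (β * D / (4 * ((k₀ + β) ^ 2 * L ^ 4))) (D / (4 * L ^ 4)))
            ≤ D / (4 * L ^ 4) :=
        le_trans (min_le_right _ _) (min_le_right _ _)
      calc min (min (β / 4) (1 / 4))
            (min (β * D / (4 * ((k₀ + β) ^ 2 * L ^ 4))) (D / (4 * L ^ 4)))
            * (4 * L ^ 4)
          ≤ D / (4 * L ^ 4) * (4 * L ^ 4) := mul_le_mul_of_nonneg_right h (by positivity)
        _ = D := by field_simp
    -- the Lyapunov function and its derivative
  set V : ℝ → ℝ := fun t => 1/2 * B t + D/2 * A t + b₂/4 * (Cc t)^2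
      - b₁/2 * Cc t - Qf t + ε * Mf t with hVdef
  set Vd : ℝ → ℝ := fun t => 1/2 * (∫ x in (0:ℝ)..L, 2 * pt w t x * pt (pt w) t x)
      + D/2 * (∫ x in (0:ℝ)..L, 2 * px (px w) t x * pt (px (px w)) t x)
      + b₂/4 * (2 * Cc t * (∫ x in (0:ℝ)..L, 2 * px w t x * pt (px w) t x))
      - b₁/2 * (∫ x in (0:ℝ)..L, 2 * px w t x * pt (px w) t x)
      - (∫ x in (0:ℝ)..L, pp x * pt w t x)
      + ε * (∫ x in (0:ℝ)..L, (pt w t x * pt w t x + w t x * pt (pt w) t x)) with hVddef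
  have hVd : ∀ t, HasDerivAt V (Vd t) t := by
    intro t
    have h := ((((((hBd t).const_mul (1/2:ℝ)).add ((hAd t).const_mul (D/2))).add
        (((hCd t).fun_pow 2).const_mul (b₂/4))).sub ((hCd t).const_mul (b₁/2))).sub
        (hQd t)).add ((hMd t).const_mul ε)
    refine h.congr_deriv ?_
    simp only [hVddef]
    push_cast
    ring
  -- identification of the derivative for t > 0
  have hkeyid : ∀ t, 0 < t → Vd t = -(k₀+β) * B t - β*U*Rf t
      + ε * (B t - D * A t - (k₀+β) * Mf t + (b₁ - b₂ * Cc t) * Cc t + Qf t) := by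
    intro t ht
    obtain ⟨hb1, hb2, hb3, hb4⟩ := hbc t ht.le
    have hpt0 : pt w t 0 = 0 := by
      have hev : (fun s => w s 0) =ᶠ[nhds t] (fun _ => (0:ℝ)) := by
        filter_upwards [Ioi_mem_nhds ht] with s hs
        exact (hbc s (le_of_lt hs)).1
      show deriv (fun s => w s 0) t = 0
      rw [Filter.EventuallyEq.deriv_eq hev]
      simp
    have hptL : pt w t L = 0 := by
      have hev : (fun s => w s L) =ᶠ[nhds t] (fun _ => (0:ℝ)) := by
        filter_upwards [Ioi_mem_nhds ht] with s hs
        exact (hbc s (le_of_lt hs)).2.2.1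
      show deriv (fun s => w s L) t = 0
      rw [Filter.EventuallyEq.deriv_eq hev]
      simp
    -- integration by parts
    have e1 : (∫ x in (0:ℝ)..L, pt w t x * px (px (px (px w))) t x)
        = ∫ x in (0:ℝ)..L, px (px (pt w)) t x * px (px w) t x := by
      have s1 := ibp (L := L) (fun x => hasDerivAt_px hwt t x)
        (fun x => hasDerivAt_px hwxxx t x)
        (cont_slice hwtx.continuous t) (cont_slice hwxxxx.continuous t)
      have s2 := ibp (L := L) (fun x => hasDerivAt_px hwtx t x)
        (fun x => hasDerivAt_px hwxx t x)
        (cont_slice hwtxx.continuous t) (cont_slice hwxxx.continuous t)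
      simp only [hpt0, hptL, zero_mul, mul_zero, sub_zero, zero_sub] at s1
      simp only [hb2, hb4, zero_mul, mul_zero, sub_zero, zero_sub] at s2
      rw [s1, s2, neg_neg]
    have e2 : (∫ x in (0:ℝ)..L, px w t x * px (pt w) t x)
        = -∫ x in (0:ℝ)..L, px (px w) t x * pt w t x := by
      have s := ibp (L := L) (fun x => hasDerivAt_px hwx t x)
        (fun x => hasDerivAt_px hwt t x)
        (cont_slice hwxx.continuous t) (cont_slice hwtx.continuous t)
      simp only [hpt0, hptL, zero_mul, mul_zero, sub_zero, zero_sub] at s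
      exact s
    have e3 : (∫ x in (0:ℝ)..L, w t x * px (px (px (px w))) t x) = A t := by
      have s1 := ibp (L := L) (fun x => hasDerivAt_px hw t x)
        (fun x => hasDerivAt_px hwxxx t x)
        (cont_slice hwx.continuous t) (cont_slice hwxxxx.continuous t)
      have s2 := ibp (L := L) (fun x => hasDerivAt_px hwx t x)
        (fun x => hasDerivAt_px hwxx t x)
        (cont_slice hwxx.continuous t) (cont_slice hwxxx.continuous t)
      simp only [hb1, hb3, zero_mul, mul_zero, sub_zero, zero_sub] at s1
      simp only [hb2, hb4, zero_mul, mul_zero, sub_zero, zero_sub] at s2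
      rw [s1, s2, neg_neg]
      exact integral_congr fun x _ => (pow_two (px (px w) t x)).symm
    have e4 : (∫ x in (0:ℝ)..L, w t x * px (px w) t x) = -Cc t := by
      have s := ibp (L := L) (fun x => hasDerivAt_px hw t x)
        (fun x => hasDerivAt_px hwx t x)
        (cont_slice hwx.continuous t) (cont_slice hwxx.continuous t)
      simp only [hb1, hb3, zero_mul, mul_zero, sub_zero, zero_sub] at s
      rw [s, neg_inj]
      exact integral_congr fun x _ => (pow_two (px w t x)).symm
    have e5 : (∫ x in (0:ℝ)..L, w t x * px w t x) = 0 := by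
      have s := ibp (L := L) (fun x => hasDerivAt_px hw t x)
        (fun x => hasDerivAt_px hw t x)
        (cont_slice hwx.continuous t) (cont_slice hwx.continuous t)
      simp only [hb1, hb3, zero_mul, mul_zero, sub_zero, zero_sub] at s
      have hcm : (∫ x in (0:ℝ)..L, px w t x * w t x)
          = ∫ x in (0:ℝ)..L, w t x * px w t x :=
        integral_congr fun x _ => mul_comm _ _
      rw [hcm] at s
      linarith
    -- PDE substitution
    have hCt : (∫ y in (0:ℝ)..L, px w t y ^ 2) = Cc t := rfl
    have hpde : ∀ x ∈ Set.Icc (0:ℝ) L, pt (pt w) t x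
        = pp x - (k₀ + β) * pt w t x - β*U*px w t x - D * px (px (px (px w))) t x
          - (b₁ - b₂ * Cc t) * px (px w) t x := by
      intro x hx
      have h := heq t ht.le x hx
      rw [hCt] at h
      rw [← hppeq x hx] at h
      linarith [h]
    have hDB : (∫ x in (0:ℝ)..L, 2 * pt w t x * pt (pt w) t x)
        = (-2*(k₀+β)) * B t + (-2*(β*U)) * Rf t
          + (-2*D) * (∫ x in (0:ℝ)..L, pt w t x * px (px (px (px w))) t x)
          + (-2*(b₁ - b₂ * Cc t)) * (∫ x in (0:ℝ)..L, pt w t x * px (px w) t x)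
          + 2 * (∫ x in (0:ℝ)..L, pp x * pt w t x) := by
      have hcg : (∫ x in (0:ℝ)..L, 2 * pt w t x * pt (pt w) t x)
          = ∫ x in (0:ℝ)..L, ((-2*(k₀+β)) * (pt w t x ^ 2)
            + (-2*(β*U)) * (px w t x * pt w t x)
            + (-2*D) * (pt w t x * px (px (px (px w))) t x)
            + (-2*(b₁ - b₂ * Cc t)) * (pt w t x * px (px w) t x)
            + 2 * (pp x * pt w t x)) := by
        refine integral_congr fun x hx => ?_
        rw [Set.uIcc_of_le hL.le] at hx
        rw [hpde x hx]; ring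
      rw [hcg, int5 _ _ _ _ _ ((cont_slice hwt.continuous t).fun_pow 2)
        ((cont_slice hwx.continuous t).fun_mul (cont_slice hwt.continuous t))
        ((cont_slice hwt.continuous t).fun_mul (cont_slice hwxxxx.continuous t))
        ((cont_slice hwt.continuous t).fun_mul (cont_slice hwxx.continuous t))
        (hppc.fun_mul (cont_slice hwt.continuous t))]
    have hDM : (∫ x in (0:ℝ)..L, (pt w t x * pt w t x + w t x * pt (pt w) t x))
        = 1 * B t + 1 * (∫ x in (0:ℝ)..L, pp x * w t x) + (-(k₀+β)) * Mf t
          + (-(β*U)) * (∫ x in (0:ℝ)..L, w t x * px w t x)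
          + (-D) * (∫ x in (0:ℝ)..L, w t x * px (px (px (px w))) t x)
          + (-(b₁ - b₂ * Cc t)) * (∫ x in (0:ℝ)..L, w t x * px (px w) t x) := by
      have hcg : (∫ x in (0:ℝ)..L, (pt w t x * pt w t x + w t x * pt (pt w) t x))
          = ∫ x in (0:ℝ)..L, (1 * (pt w t x ^ 2) + 1 * (pp x * w t x)
            + (-(k₀+β)) * (w t x * pt w t x)
            + (-(β*U)) * (w t x * px w t x)
            + (-D) * (w t x * px (px (px (px w))) t x)
            + (-(b₁ - b₂ * Cc t)) * (w t x * px (px w) t x)) := by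
        refine integral_congr fun x hx => ?_
        rw [Set.uIcc_of_le hL.le] at hx
        rw [hpde x hx]; ring
      rw [hcg, int6 _ _ _ _ _ _ ((cont_slice hwt.continuous t).fun_pow 2)
        (hppc.fun_mul (cont_slice hw.continuous t))
        ((cont_slice hw.continuous t).fun_mul (cont_slice hwt.continuous t))
        ((cont_slice hw.continuous t).fun_mul (cont_slice hwx.continuous t))
        ((cont_slice hw.continuous t).fun_mul (cont_slice hwxxxx.continuous t))
        ((cont_slice hw.continuous t).fun_mul (cont_slice hwxx.continuous t))]
    have hDA : (∫ x in (0:ℝ)..L, 2 * px (px w) t x * pt (px (px w)) t x)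
        = 2 * (∫ x in (0:ℝ)..L, pt w t x * px (px (px (px w))) t x) := by
      have hcg : (∫ x in (0:ℝ)..L, 2 * px (px w) t x * pt (px (px w)) t x)
          = ∫ x in (0:ℝ)..L, 2 * (px (px (pt w)) t x * px (px w) t x) :=
        integral_congr fun x _ => by rw [hcomm2 t x]; ring
      rw [hcg, intervalIntegral.integral_const_mul, ← e1, ← intervalIntegral.integral_const_mul]
    have hDC : (∫ x in (0:ℝ)..L, 2 * px w t x * pt (px w) t x)
        = -2 * (∫ x in (0:ℝ)..L, px (px w) t x * pt w t x) := by
      have hcg : (∫ x in (0:ℝ)..L, 2 * px w t x * pt (px w) t x)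
          = ∫ x in (0:ℝ)..L, 2 * (px w t x * px (pt w) t x) :=
        integral_congr fun x _ => by rw [hcomm]; ring
      rw [hcg, intervalIntegral.integral_const_mul, e2]; ring
    have hcm2 : (∫ x in (0:ℝ)..L, px (px w) t x * pt w t x)
        = ∫ x in (0:ℝ)..L, pt w t x * px (px w) t x :=
      integral_congr fun x _ => mul_comm _ _
    have hQt : (∫ x in (0:ℝ)..L, pp x * w t x) = Qf t := rfl
    simp only [hVddef]
    rw [hDB, hDA, hDC, hDM, hcm2, e3, e4, e5, hQt]
    ring
    -- absolute-value bounds for the lower-order terms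
  have hQabs : ∀ t, |Qf t| ≤ D/(8*L^4) * Wf t + 1/(4*(D/(8*L^4))) * P := by
    intro t
    exact abs_int_young hL (by positivity) hppc (cont_slice hw.continuous t)
  have hMabs : ∀ t, |Mf t| ≤ 1/2 * B t + 1/2 * Wf t := by
    intro t
    have h := abs_int_young (h := 1/2) hL (by norm_num)
      (cont_slice hw.continuous t) (cont_slice hwt.continuous t)
    calc |Mf t| ≤ 1/2 * B t + 1/(4*(1/2)) * Wf t := h
      _ = 1/2 * B t + 1/2 * Wf t := by norm_num
  have hQWA : ∀ t ≥ (0:ℝ), D/(8*L^4) * Wf t ≤ D/8 * A t := by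
    intro t ht
    have h1 := hWA t ht
    have h2 : (0:ℝ) ≤ D/(8*L^4) := by positivity
    have h3 : D/(8*L^4) * (L^4 * A t) = D/8 * A t := by
      field_simp
    linarith [mul_le_mul_of_nonneg_left h1 h2]
  -- the three dissipation estimates
  have hT1 : ∀ t, -(β*U * Rf t) ≤ β/4 * B t + (β*U)^2/β * Cc t := fun t =>
    young_int hL hβ (cont_slice hwx.continuous t) (cont_slice hwt.continuous t)
  have hT2 : ∀ t, -(ε*(k₀+β) * Mf t) ≤ β/4 * B t + (ε*(k₀+β))^2/β * Wf t := fun t =>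
    young_int hL hβ (cont_slice hw.continuous t) (cont_slice hwt.continuous t)
  have hT2' : ∀ t ≥ (0:ℝ), (ε*(k₀+β))^2/β * Wf t ≤ ε*D/4 * A t := by
    intro t ht
    rw [div_mul_eq_mul_div, div_le_iff₀ hβ]
    linarith [mul_le_mul_of_nonneg_left (hWA t ht)
        (by positivity : (0:ℝ) ≤ (ε*(k₀+β))^2),
      mul_le_mul_of_nonneg_left hε3 (mul_nonneg hε0.le (hA0 t))]
  -- constants
  set KQ : ℝ := (b₁/2)^2/(4*(b₂/16)) + 1/(4*(D/(8*L^4))) * P with hKQdef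
  set KK : ℝ := ((β*U)^2/β)^2/(4*(ε*b₂/4)) + (ε*b₁)^2/(4*(ε*b₂/4))
      + ε*(1/(4*(D/(8*L^4))) * P) with hKKdef
  -- upper bound for V
  have hVup : ∀ t ≥ (0:ℝ), V t ≤ B t + D * A t + 3*b₂/8 * (Cc t)^2 + KQ := by
    intro t ht
    have f1 : -Qf t ≤ D/8 * A t + 1/(4*(D/(8*L^4))) * P := by
      have := hQabs t
      have := hQWA t ht
      have habs := neg_abs_le (Qf t)
      linarith
    have f2 : ε * Mf t ≤ 1/8 * B t + D/8 * A t := by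
      have h1 := hMabs t
      have h2 := le_abs_self (Mf t)
      have h3 := hWA t ht
      -- ε * Mf t ≤ ε*(1/2 B + 1/2 Wf) ≤ 1/8 B + (ε/2) L^4 A ≤ 1/8 B + D/8 A
      have h4 : ε * Mf t ≤ ε * (1/2 * B t + 1/2 * Wf t) := by
        apply mul_le_mul_of_nonneg_left (h2.trans h1) hε0.le
      have s1 : 0 ≤ (1/4 - ε) * B t := mul_nonneg (by linarith) (hB0 t)
      have s2 : ε * Wf t ≤ ε * (L^4 * A t) := mul_le_mul_of_nonneg_left h3 hε0.le
      have s3 : ε * L^4 * A t ≤ D/4 * A t :=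
        mul_le_mul_of_nonneg_right (by linarith) (hA0 t)
      linarith
    have f3 : -(b₁/2) * Cc t ≤ b₂/16 * (Cc t)^2 + (b₁/2)^2/(4*(b₂/16)) := by
      have h := young_sq (h := b₂/16) (A := -(b₁/2)) (c := Cc t) (by positivity)
      have e : (-(b₁/2))^2 = (b₁/2)^2 := by ring
      rw [e] at h
      exact h
    simp only [hVdef, hKQdef]
    linarith [mul_nonneg hb₂.le (sq_nonneg (Cc t)), mul_nonneg hD.le (hA0 t), hB0 t]
  -- lower bound for V
  have hVlow : ∀ t ≥ (0:ℝ), 3/8 * B t + D/4 * A t - KQ ≤ V t := by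
    intro t ht
    have f1 : Qf t ≤ D/8 * A t + 1/(4*(D/(8*L^4))) * P := by
      have := hQabs t
      have := hQWA t ht
      have habs := le_abs_self (Qf t)
      linarith
    have f2 : -(ε * Mf t) ≤ 1/8 * B t + D/8 * A t := by
      have h1 := hMabs t
      have h2 := neg_abs_le (Mf t)
      have h3 := hWA t ht
      have h4 : -(ε * Mf t) ≤ ε * (1/2 * B t + 1/2 * Wf t) := by
        have := mul_le_mul_of_nonneg_left h1 hε0.le
        nlinarith [abs_nonneg (Mf t), hε0.le]
      have s1 : 0 ≤ (1/4 - ε) * B t := mul_nonneg (by linarith) (hB0 t)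
      have s2 : ε * Wf t ≤ ε * (L^4 * A t) := mul_le_mul_of_nonneg_left h3 hε0.le
      have s3 : ε * L^4 * A t ≤ D/4 * A t :=
        mul_le_mul_of_nonneg_right (by linarith) (hA0 t)
      linarith
    have f3 : b₁/2 * Cc t ≤ b₂/16 * (Cc t)^2 + (b₁/2)^2/(4*(b₂/16)) :=
      young_sq (by positivity)
    simp only [hVdef, hKQdef]
    linarith [mul_nonneg hb₂.le (sq_nonneg (Cc t))]
  -- the differential inequality
  have hkey : ∀ t, 0 < t → Vd t ≤ -(β/4) * B t - ε*D/2 * A t - ε*b₂/2 * (Cc t)^2 + KK := by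
    intro t ht
    rw [hkeyid t ht]
    have g1 := hT1 t
    have g2 := hT2 t
    have g2' := hT2' t ht.le
    have g3 : ε * Qf t ≤ ε*D/8 * A t + ε*(1/(4*(D/(8*L^4))) * P) := by
      have h1 := hQabs t
      have h2 := le_abs_self (Qf t)
      have h3 := hQWA t ht.le
      have h4 : ε * Qf t ≤ ε * (D/(8*L^4) * Wf t + 1/(4*(D/(8*L^4))) * P) :=
        mul_le_mul_of_nonneg_left (h2.trans h1) hε0.le
      linarith [mul_le_mul_of_nonneg_left h3 hε0.le]
    have g4 : (β*U)^2/β * Cc t ≤ ε*b₂/4 * (Cc t)^2 + ((β*U)^2/β)^2/(4*(ε*b₂/4)) :=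
      young_sq (by positivity)
    have g5 : ε*b₁ * Cc t ≤ ε*b₂/4 * (Cc t)^2 + (ε*b₁)^2/(4*(ε*b₂/4)) :=
      young_sq (by positivity)
    have slackB : 0 ≤ (k₀ + β/4 - ε) * B t :=
      mul_nonneg (by linarith) (hB0 t)
    have slackA : 0 ≤ ε * D * A t :=
      mul_nonneg (mul_nonneg hε0.le hD.le) (hA0 t)
    simp only [hKKdef]
    linarith [g1, g2, g2', g3, g4, g5, slackB, slackA]
    -- the decay rate μ
  set μ : ℝ := min (min (β/4) (ε/2)) (4*ε/3) with hμdef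
  have hμ0 : 0 < μ := lt_min (lt_min (by linarith) (by linarith)) (by linarith)
  have hμ1 : μ ≤ β/4 := le_trans (min_le_left _ _) (min_le_left _ _)
  have hμ2 : μ ≤ ε/2 := le_trans (min_le_left _ _) (min_le_right _ _)
  have hμ3 : μ ≤ 4*ε/3 := min_le_right _ _
  -- differential inequality in terms of V
  have hfin : ∀ t, 0 < t → Vd t ≤ -μ * V t + (KK + μ * KQ) := by
    intro t ht
    have h1 := hkey t ht
    have h2 := hVup t ht.le
    have h3 := mul_le_mul_of_nonneg_left h2 hμ0.le
    have s1 : 0 ≤ (β/4 - μ) * B t := mul_nonneg (by linarith) (hB0 t)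
    have s2 : 0 ≤ (ε/2 - μ) * D * A t :=
      mul_nonneg (mul_nonneg (by linarith) hD.le) (hA0 t)
    have s3 : 0 ≤ (4*ε/3 - μ) * (3*b₂/8) * (Cc t)^2 :=
      mul_nonneg (mul_nonneg (by linarith) (by linarith)) (sq_nonneg _)
    clear_value V Vd KK KQ μ A B Cc
    linarith [h1, h3, s1, s2, s3]
  set S : ℝ := (KK + μ * KQ) / μ with hSdef
  have hS : μ * S = KK + μ * KQ := by
    rw [hSdef]
    field_simp
  -- the Gronwall-type function
  set G : ℝ → ℝ := fun s => (V s - S) * Real.exp (μ * s) with hGdef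
  have hGd : ∀ s, HasDerivAt G
      (Vd s * Real.exp (μ * s) + (V s - S) * (Real.exp (μ * s) * (μ * 1))) s := by
    intro s
    exact ((hVd s).sub_const S).mul (((hasDerivAt_id s).const_mul μ).exp)
  have hVcont : Continuous V := by
    have : Differentiable ℝ V := fun s => (hVd s).differentiableAt
    exact this.continuous
  have hGanti : AntitoneOn G (Set.Ici (0:ℝ)) := by
    refine antitoneOn_of_deriv_nonpos (convex_Ici 0) ?_ ?_ ?_
    · exact ((hVcont.sub continuous_const).mul
        (Real.continuous_exp.comp (continuous_const.mul continuous_id))).continuousOn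
    · intro s _
      exact ((hGd s).differentiableAt).differentiableWithinAt
    · intro s hs
      rw [interior_Ici] at hs
      rw [(hGd s).deriv]
      have hb := hfin s hs
      have hfac : Vd s * Real.exp (μ * s) + (V s - S) * (Real.exp (μ * s) * (μ * 1))
          = (Vd s + μ * (V s - S)) * Real.exp (μ * s) := by ring
      rw [hfac]
      apply mul_nonpos_of_nonpos_of_nonneg
      · have : μ * (V s - S) = μ * V s - (KK + μ * KQ) := by
          rw [← hS]; ring
        linarith
      · exact (Real.exp_pos _).le
  -- uniform bound on V
  have hVbd : ∀ t ≥ (0:ℝ), V t ≤ S + |V 0 - S| := by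
    intro t ht
    have hG0 : G t ≤ G 0 := hGanti Set.self_mem_Ici ht ht
    have hGt : G t = (V t - S) * Real.exp (μ * t) := rfl
    have hG00 : G 0 = V 0 - S := by
      simp only [hGdef]
      rw [mul_zero, Real.exp_zero, mul_one]
    rw [hGt, hG00] at hG0
    have he1 : 1 ≤ Real.exp (μ * t) := Real.one_le_exp (mul_nonneg hμ0.le ht)
    rcases le_or_gt (V t - S) 0 with h | h
    · have := abs_nonneg (V 0 - S)
      linarith
    · have h2 : V t - S ≤ (V t - S) * Real.exp (μ * t) :=
        le_mul_of_one_le_right h.le he1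
      have := le_abs_self (V 0 - S)
      linarith
  -- conclusion
  refine ⟨max ((S + |V 0 - S| + KQ) / min (3/8 : ℝ) (D/4)) 1,
    lt_of_lt_of_le one_pos (le_max_right _ _), ?_⟩
  intro t ht
  have hρ0 : (0:ℝ) < min (3/8 : ℝ) (D/4) := lt_min (by norm_num) (by linarith)
  have hρ1 : min (3/8 : ℝ) (D/4) ≤ 3/8 := min_le_left _ _
  have hρ2 : min (3/8 : ℝ) (D/4) ≤ D/4 := min_le_right _ _
  have h1 := hVlow t ht
  have h2 := hVbd t ht
  have h3 : min (3/8 : ℝ) (D/4) * (A t + B t) ≤ S + |V 0 - S| + KQ := by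
    have hA' : min (3/8 : ℝ) (D/4) * A t ≤ D/4 * A t :=
      mul_le_mul_of_nonneg_right hρ2 (hA0 t)
    have hB' : min (3/8 : ℝ) (D/4) * B t ≤ 3/8 * B t :=
      mul_le_mul_of_nonneg_right hρ1 (hB0 t)
    clear_value V S KQ A B
    linarith [h1, h2, hA', hB']
  have h4 : A t + B t ≤ (S + |V 0 - S| + KQ) / min (3/8 : ℝ) (D/4) := by
    rw [le_div_iff₀ hρ0]
    linarith [h3]
  show A t + B t ≤ _
  exact h4.trans (le_max_left _ _)
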